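/- arXiv:1501.00208 — 2 statements merged into one kernel-verified Lean document; each statement's English description precedes it below -/
import Mathlib

section
/- Let ϖ be the two-parameter EPPF ϖ(n₁,…,n_k) = ([θ+α]_{k-1;α} / [θ+1]_{n-1}) ∏_{i=1}^k [1-α]_{n_i-1}, where 0 ≤ α < 1, θ > -α, n = ∑ n_i, and [x]_{m;a} = x(x+a)⋯(x+(m-1)a) with [x]_{0;a} = 1 and [x]_m = [x]_{m;1}. Then ϖ(1) = 1 and ϖ(n) = ∑_{j=1}^{k+1} ϖ(n^{+j}) for every finite composition n. -/
/-!
Adding one element to a composition `(n₁, …, n_k)` of `n` multiplies `ϖ` by the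
Chinese-restaurant seating probability: by `(n_j - α) / (θ + n)` when part `j` grows, and by
`(θ + k α) / (θ + n)` when a new part is opened. These `k + 1` factors sum to `(n - k α + θ + k α) / (θ + n) = 1`.
-/

/-- The generalized rising factorial `[x]_{m;a} = x (x+a) ⋯ (x+(m-1)a)`. -/
noncomputable def risingFacStep (x a : ℝ) (m : ℕ) : ℝ := ∏ j ∈ Finset.range m, (x + j * a)

/-- The two-parameter (Pitman) EPPF applied to a composition given as a list of part sizes:
`ϖ(n₁,…,n_k) = ([θ+α]_{k-1;α} / [θ+1]_{n-1}) ∏_i [1-α]_{n_i-1}`. -/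
noncomputable def tpEPPF (θ α : ℝ) (l : List ℕ) : ℝ :=
  (risingFacStep (θ + α) α (l.length - 1) / risingFacStep (θ + 1) 1 (l.sum - 1)) *
    (l.map (fun i => risingFacStep (1 - α) 1 (i - 1))).prod

namespace List

@[to_additive]
theorem prod_map_set_of_eq_mul {α M : Type*} [CommMonoid M] (f : α → M) {l : List α} {j : ℕ}
    (hj : j < l.length) {a : α} {c : M} (ha : f a = f l[j] * c) :
    ((l.set j a).map f).prod = (l.map f).prod * c := by
  have hj' : j < (l.map f).length := by simpa using hj
  rw [map_set, prod_set, if_pos hj', ha, ← prod_take_mul_prod_drop (l.map f) (j + 1),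
    prod_take_succ _ _ hj', getElem_map]
  ac_rfl

end List

@[simp]
theorem risingFacStep_zero (x a : ℝ) : risingFacStep x a 0 = 1 :=
  Finset.prod_range_zero _

theorem risingFacStep_pos {x a : ℝ} (hx : 0 < x) (ha : 0 ≤ a) (m : ℕ) :
    0 < risingFacStep x a m :=
  Finset.prod_pos fun _ _ => by positivity

theorem risingFacStep_pred_mul (x a : ℝ) {n : ℕ} (hn : 0 < n) :
    risingFacStep x a (n - 1) * (x + (n - 1) * a) = risingFacStep x a n := by
  obtain ⟨m, rfl⟩ := Nat.exists_eq_add_of_lt hn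
  simp [risingFacStep, Finset.prod_range_succ]

theorem add_natCast_pos_of_add_one_pos {x : ℝ} (hx : 0 < x + 1) {n : ℕ} (hn : 0 < n) :
    0 < x + n := by
  have : (1 : ℝ) ≤ n := by exact_mod_cast hn
  linarith

section tpEPPF

variable {θ α : ℝ}

theorem tpEPPF_singleton_one : tpEPPF θ α [1] = 1 := by
  simp [tpEPPF]

theorem tpEPPF_set_succ (hθ : 0 < θ + 1) {l : List ℕ} {j : ℕ} (hj : j < l.length)
    (hj1 : 1 ≤ l[j]) :
    tpEPPF θ α (l.set j (l[j] + 1)) = tpEPPF θ α l * ((l[j] - α) / (θ + l.sum)) := by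
  have hn : 0 < l.sum := hj1.trans (List.le_sum_of_mem (List.getElem_mem hj))
  have hsum : (l.set j (l[j] + 1)).sum = l.sum + 1 := by
    simpa using List.sum_map_set_of_eq_add id hj (a := l[j] + 1) rfl
  have hprod : ((l.set j (l[j] + 1)).map fun i => risingFacStep (1 - α) 1 (i - 1)).prod =
      (l.map fun i => risingFacStep (1 - α) 1 (i - 1)).prod * (l[j] - α) := by
    refine List.prod_map_set_of_eq_mul _ hj ?_
    rw [Nat.add_sub_cancel, ← risingFacStep_pred_mul _ _ hj1]
    ring
  have hden : 0 < risingFacStep (θ + 1) 1 (l.sum - 1) := risingFacStep_pos hθ zero_le_one _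
  have hθn : 0 < θ + l.sum := add_natCast_pos_of_add_one_pos hθ hn
  simp only [tpEPPF, List.length_set, hsum, hprod, Nat.add_sub_cancel]
  rw [← risingFacStep_pred_mul _ _ hn, show θ + 1 + ((l.sum : ℝ) - 1) * 1 = θ + l.sum by ring]
  field_simp

theorem tpEPPF_append_singleton_one (hθ : 0 < θ + 1) {l : List ℕ} (hn : 0 < l.sum) :
    tpEPPF θ α (l ++ [1]) = tpEPPF θ α l * ((θ + l.length * α) / (θ + l.sum)) := by
  have hk : 0 < l.length := List.length_pos_of_sum_pos l hn
  have hden : 0 < risingFacStep (θ + 1) 1 (l.sum - 1) := risingFacStep_pos hθ zero_le_one _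
  have hθn : 0 < θ + l.sum := add_natCast_pos_of_add_one_pos hθ hn
  simp only [tpEPPF, List.length_append, List.sum_append, List.map_append, List.prod_append,
    List.length_singleton, List.sum_singleton, Nat.add_sub_cancel]
  rw [← risingFacStep_pred_mul _ _ hn, ← risingFacStep_pred_mul _ _ hk,
    show θ + 1 + ((l.sum : ℝ) - 1) * 1 = θ + l.sum by ring,
    show θ + α + ((l.length : ℝ) - 1) * α = θ + l.length * α by ring]
  simp only [List.map_cons, List.map_nil, List.prod_cons, List.prod_nil, Nat.sub_self,
    risingFacStep_zero, mul_one]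
  field_simp

end tpEPPF

theorem tpEPPF_consistency_general (θ α : ℝ) (hα1 : α < 1) (hθ : θ > -α) :
    tpEPPF θ α [1] = 1 ∧
      ∀ l : List ℕ, l ≠ [] → (∀ i ∈ l, 1 ≤ i) →
        tpEPPF θ α l =
          (∑ j ∈ Finset.range l.length, tpEPPF θ α (l.set j (l.getD j 0 + 1))) +
            tpEPPF θ α (l ++ [1]) := by
  have hθ1 : 0 < θ + 1 := by linarith
  refine ⟨tpEPPF_singleton_one, fun l hl hpos => ?_⟩
  have hn : 0 < l.sum := by
    obtain ⟨a, ha⟩ := List.exists_mem_of_ne_nil l hl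
    exact (hpos a ha).trans (List.le_sum_of_mem ha)
  have hθn : 0 < θ + l.sum := add_natCast_pos_of_add_one_pos hθ1 hn
  have hset (i : Fin l.length) : tpEPPF θ α (l.set i (l.getD i 0 + 1)) =
      tpEPPF θ α l * ((l[i] - α) / (θ + l.sum)) := by
    rw [List.getD_eq_getElem _ _ i.isLt]
    exact tpEPPF_set_succ hθ1 i.isLt (hpos _ (List.getElem_mem _))
  have hweights : ∑ i : Fin l.length, ((l[i] : ℝ) - α) + (θ + l.length * α) = θ + l.sum := by
    simp [Finset.sum_sub_distrib, add_comm]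
  rw [Finset.sum_range, Fintype.sum_congr _ _ hset, tpEPPF_append_singleton_one hθ1 hn,
    ← Finset.mul_sum, ← mul_add, ← Finset.sum_div, ← add_div, hweights,
    div_self hθn.ne', mul_one]

/-- The two-parameter EPPF satisfies the EPPF consistency (addition) rule. -/
theorem tpEPPF_consistency (θ α : ℝ) (hα0 : 0 ≤ α) (hα1 : α < 1) (hθ : θ > -α) :
    tpEPPF θ α [1] = 1 ∧
      ∀ l : List ℕ, l ≠ [] → (∀ i ∈ l, 1 ≤ i) →
        tpEPPF θ α l =
          (∑ j ∈ Finset.range l.length, tpEPPF θ α (l.set j (l.getD j 0 + 1))) +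
            tpEPPF θ α (l ++ [1]) :=
  tpEPPF_consistency_general θ α hα1 hθ
end

section
/- Let Π be an exchangeable random partition of ℕ with blocks labelled in order of appearance, let N_{1n} = |[n] ∩ C₁| be the size of the block containing 1 among the first n integers, and let K_n be the number of blocks of Π restricted to [n]. Then for all 1 ≤ k ≤ n: (a) Pr{N₁ₖ = k ∧ N₁ₙ = k} = (n-1 choose k-1)^{-1} Pr{N₁ₙ = k}; and (b) Pr{N₁ₙ = 1} = Pr{K_n > K_{n-1}}. -/
open MeasureTheory

/-- `blockOneCount X n ω` = `N_{1n}`, the number of elements of `{0,…,n-1}` (representing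
`[n] = {1,…,n}`) in the block of the first element `0`. -/
def blockOneCount {Ω : Type*} (X : Ω → ℕ → ℕ → Bool) (n : ℕ) (ω : Ω) : ℕ :=
  ((Finset.range n).filter (fun i => X ω 0 i = true)).card

/-- `numBlocks X n ω` = `K_n`, the number of blocks of the partition restricted to the
first `n` elements (an element opens a new block iff it is related to no earlier one). -/
def numBlocks {Ω : Type*} (X : Ω → ℕ → ℕ → Bool) (n : ℕ) (ω : Ω) : ℕ :=
  ((Finset.range n).filter (fun i => ∀ j ∈ Finset.range i, X ω i j = false)).card

/-!
Almost surely `0` is related to itself, so the block of `0` inside `{0, …, n-1}` is `0` together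
with `B = blockWithin X 0 (Ico 1 n)`. A permutation of `ℕ` that fixes `0` and stabilises
`Ico 1 n` preserves the law of `X` and carries the event `{B = T}` to `{B = σ T}`. Permutations act
transitively on subsets of a given size, so each of the `(n-1).choose (k-1)` events `{B = T}` with
`#T = k - 1` is as likely as `{B = Ico 1 k}`, which is the joint event of (a). For (b), the swap of
`0` and `n - 1` turns "`0` is related to nothing in `Ico 1 n`" into "`n - 1` is related to nothing
in `range (n - 1)`", which says that `n - 1` opens a new block.
-/

open Finset

theorem exists_perm_image_eq {α : Type*} [DecidableEq α] {R T₁ T₂ : Finset α}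
    (h₁ : T₁ ⊆ R) (h₂ : T₂ ⊆ R) (hcard : #T₁ = #T₂) :
    ∃ σ : Equiv.Perm α, (∀ x ∉ R, σ x = x) ∧ T₁.image σ = T₂ := by
  have hsub : ∀ {T : Finset α}, T ⊆ R →
      (T.subtype (· ∈ R)).map (Function.Embedding.subtype _) = T :=
    fun h => subtype_map_of_mem fun _ hx => h hx
  have hcard' : ∀ {T : Finset α}, T ⊆ R → #(T.subtype (· ∈ R)) = #T := fun h => by
    rw [← card_map (Function.Embedding.subtype _), hsub h]
  obtain ⟨τ, hτ⟩ := (Set.powersetCard.isPretransitive (α := R) (n := #T₁)).exists_smul_eq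
    ⟨T₁.subtype (· ∈ R), hcard' h₁⟩ ⟨T₂.subtype (· ∈ R), (hcard' h₂).trans hcard.symm⟩
  refine ⟨Equiv.Perm.ofSubtype τ, fun x hx => Equiv.Perm.ofSubtype_apply_of_not_mem τ hx, ?_⟩
  have hτ' : (T₁.subtype (· ∈ R)).image τ = T₂.subtype (· ∈ R) := congrArg Subtype.val hτ
  rw [← hsub h₁, ← hsub h₂, ← hτ', map_eq_image, map_eq_image, image_image, image_image]
  exact image_congr fun x _ => Equiv.Perm.ofSubtype_apply_coe τ x

theorem image_perm_eq_self {α : Type*} [DecidableEq α] {σ : Equiv.Perm α} {R : Finset α}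
    (hσ : ∀ x ∉ R, σ x = x) : R.image σ = R :=
  (map_eq_image σ.toEmbedding R).symm.trans (map_perm fun x hx => not_not.1 (mt (hσ x) hx))

theorem filter_eq_iff_of_subset {α : Type*} {A B : Finset α} {p : α → Prop} [DecidablePred p]
    (hAB : A ⊆ B) : (∀ x ∈ A, p x) ∧ #(B.filter p) = #A ↔ B.filter p = A := by
  constructor
  · rintro ⟨hA, hcard⟩
    exact (eq_of_subset_of_card_le (fun x hx => mem_filter.2 ⟨hAB hx, hA x hx⟩) hcard.le).symm
  · rintro h
    exact ⟨fun x hx => (mem_filter.1 (h ▸ hx)).2, by rw [h]⟩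

theorem measurableSet_filter_eq (a : ℕ) (S T : Finset ℕ) :
    MeasurableSet {f : ℕ → ℕ → Bool | S.filter (fun j => f a j = true) = T} := by
  by_cases hT : T ⊆ S
  · have : {f : ℕ → ℕ → Bool | S.filter (fun j => f a j = true) = T} =
        ⋂ j ∈ S, {f | f a j = decide (j ∈ T)} := by
      ext f
      simp only [Set.mem_ofPred_eq, Set.mem_iInter, Finset.ext_iff, mem_filter]
      grind
    rw [this]
    exact .biInter S.countable_toSet fun j _ =>
      ((measurable_pi_apply j).comp (measurable_pi_apply a)) (measurableSet_singleton _)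
  · convert MeasurableSet.empty
    refine Set.eq_empty_of_forall_notMem fun f hf => hT ?_
    exact (Set.mem_ofPred_eq ▸ hf) ▸ filter_subset _ _

theorem measure_card_eq_sum_powersetCard {Ω α : Type*} [MeasurableSpace Ω] {μ : Measure Ω}
    [DecidableEq α] {F : Ω → Finset α} {R : Finset α} (hF : ∀ ω, F ω ⊆ R)
    (hmeas : ∀ T, MeasurableSet {ω | F ω = T}) (m : ℕ) :
    μ {ω | #(F ω) = m} = ∑ T ∈ R.powersetCard m, μ {ω | F ω = T} := by
  have : {ω | #(F ω) = m} = ⋃ T ∈ R.powersetCard m, {ω | F ω = T} := by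
    ext ω
    simp [hF ω]
  rw [this, measure_biUnion_finset _ fun T _ => hmeas T]
  intro T₁ _ T₂ _ hne
  exact Set.disjoint_left.2 fun ω h₁ h₂ => hne (h₁.symm.trans h₂)

section Blocks

variable {Ω : Type*} {X : Ω → ℕ → ℕ → Bool}

def blockWithin (X : Ω → ℕ → ℕ → Bool) (a : ℕ) (S : Finset ℕ) (ω : Ω) : Finset ℕ :=
  S.filter fun j => X ω a j = true

theorem blockOneCount_eq_card_blockWithin_add_one {ω : Ω} (h₀ : X ω 0 0 = true) {m : ℕ}
    (hm : 1 ≤ m) : blockOneCount X m ω = #(blockWithin X 0 (Ico 1 m) ω) + 1 := by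
  rw [blockOneCount, range_eq_Ico, ← insert_Ico_add_one_left_eq_Ico hm, filter_insert, if_pos h₀,
    card_insert_of_notMem (by simp)]
  rfl

theorem numBlocks_lt_succ_iff {m : ℕ} {ω : Ω} :
    numBlocks X m ω < numBlocks X (m + 1) ω ↔ blockWithin X m (range m) ω = ∅ := by
  have hm : m ∉ (range m).filter fun i => ∀ j ∈ range i, X ω i j = false := by simp
  have hnew : blockWithin X m (range m) ω = ∅ ↔ ∀ j ∈ range m, X ω m j = false := by
    simp [blockWithin, filter_eq_empty_iff]
  rw [hnew, numBlocks, numBlocks, range_add_one, filter_insert]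
  split_ifs with h
  · exact iff_of_true (by rw [card_insert_of_notMem hm]; omega) h
  · exact iff_of_false (lt_irrefl _) h

variable [MeasurableSpace Ω]

def IsExchangeable (μ : Measure Ω) (X : Ω → ℕ → ℕ → Bool) : Prop :=
  ∀ σ : Equiv.Perm ℕ, μ.map X = μ.map fun ω i j => X ω (σ i) (σ j)

variable {μ : Measure Ω}

theorem measurableSet_blockWithin_eq (hX : Measurable X) (a : ℕ) (S T : Finset ℕ) :
    MeasurableSet {ω | blockWithin X a S ω = T} :=
  hX (measurableSet_filter_eq a S T)

theorem IsExchangeable.measure_preimage_relabel (hexch : IsExchangeable μ X) (hX : Measurable X)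
    (σ : Equiv.Perm ℕ) {C : Set (ℕ → ℕ → Bool)} (hC : MeasurableSet C) :
    μ (X ⁻¹' C) = μ ((fun ω i j => X ω (σ i) (σ j)) ⁻¹' C) := by
  have hXσ : Measurable fun ω i j => X ω (σ i) (σ j) :=
    measurable_pi_lambda _ fun i => measurable_pi_lambda _ fun j =>
      (measurable_pi_apply (σ j)).comp ((measurable_pi_apply (σ i)).comp hX)
  rw [← Measure.map_apply hX hC, hexch σ, Measure.map_apply hXσ hC]

theorem IsExchangeable.measure_blockWithin_eq_image (hexch : IsExchangeable μ X)
    (hX : Measurable X) (σ : Equiv.Perm ℕ) (a : ℕ) (S T : Finset ℕ) :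
    μ {ω | blockWithin X a S ω = T} =
      μ {ω | blockWithin X (σ a) (S.image σ) ω = T.image σ} := by
  rw [show {ω | blockWithin X a S ω = T} = X ⁻¹' {f | S.filter (fun j => f a j = true) = T}
      from rfl, hexch.measure_preimage_relabel hX σ (measurableSet_filter_eq a S T)]
  congr 1
  ext ω
  simp only [Set.mem_preimage, Set.mem_ofPred_eq, blockWithin, filter_image]
  exact (image_injective σ.injective).eq_iff.symm

theorem IsExchangeable.measure_blockWithin_eq_of_card_eq (hexch : IsExchangeable μ X)
    (hX : Measurable X) {a : ℕ} {S T₁ T₂ : Finset ℕ} (ha : a ∉ S) (h₁ : T₁ ⊆ S) (h₂ : T₂ ⊆ S)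
    (hcard : #T₁ = #T₂) :
    μ {ω | blockWithin X a S ω = T₁} = μ {ω | blockWithin X a S ω = T₂} := by
  obtain ⟨σ, hσS, hσT⟩ := exists_perm_image_eq h₁ h₂ hcard
  rw [hexch.measure_blockWithin_eq_image hX σ, hσS a ha, image_perm_eq_self hσS, hσT]

theorem IsExchangeable.measure_blockOneCount_eq_one (hexch : IsExchangeable μ X)
    (hX : Measurable X) (h₀ : ∀ᵐ ω ∂μ, X ω 0 0 = true) (m : ℕ) :
    μ {ω | blockOneCount X (m + 1) ω = 1} =
      μ {ω | numBlocks X m ω < numBlocks X (m + 1) ω} := by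
  have hsingleton : {ω | blockOneCount X (m + 1) ω = 1} =ᵐ[μ]
      {ω | blockWithin X 0 (Ico 1 (m + 1)) ω = ∅} := by
    rw [Filter.eventuallyEq_set]
    filter_upwards [h₀] with ω hω
    simp [blockOneCount_eq_card_blockWithin_add_one hω (Nat.le_add_left 1 m)]
  have hswap : (Ico 1 (m + 1)).image (Equiv.swap 0 m) = range m := by
    ext x
    simp only [mem_image, mem_Ico, mem_range]
    constructor
    · rintro ⟨y, hy, rfl⟩
      rw [Equiv.swap_apply_def]
      split_ifs <;> omega
    · intro hx
      refine ⟨Equiv.swap 0 m x, ?_, Equiv.swap_apply_self _ _ _⟩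
      rw [Equiv.swap_apply_def]
      split_ifs <;> omega
  calc μ {ω | blockOneCount X (m + 1) ω = 1}
      = μ {ω | blockWithin X 0 (Ico 1 (m + 1)) ω = ∅} := measure_congr hsingleton
    _ = μ {ω | blockWithin X m (range m) ω = ∅} := by
      rw [hexch.measure_blockWithin_eq_image hX (Equiv.swap 0 m), Equiv.swap_apply_left, hswap,
        image_empty]
    _ = μ {ω | numBlocks X m ω < numBlocks X (m + 1) ω} := by simp_rw [numBlocks_lt_succ_iff]

theorem IsExchangeable.measure_blockOneCount_eq_choose_mul (hexch : IsExchangeable μ X)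
    (hX : Measurable X) (h₀ : ∀ᵐ ω ∂μ, X ω 0 0 = true) {n k : ℕ} (hk : 1 ≤ k) (hkn : k ≤ n) :
    μ {ω | blockOneCount X n ω = k} =
      (n - 1).choose (k - 1) * μ {ω | blockOneCount X k ω = k ∧ blockOneCount X n ω = k} := by
  have hIco : Ico 1 k ⊆ Ico 1 n := Ico_subset_Ico_right hkn
  have hcount : {ω | blockOneCount X n ω = k} =ᵐ[μ]
      {ω | #(blockWithin X 0 (Ico 1 n) ω) = k - 1} := by
    rw [Filter.eventuallyEq_set]
    filter_upwards [h₀] with ω hω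
    simp only [blockOneCount_eq_card_blockWithin_add_one hω (hk.trans hkn)]
    omega
  have hjoint : {ω | blockOneCount X k ω = k ∧ blockOneCount X n ω = k} =ᵐ[μ]
      {ω | blockWithin X 0 (Ico 1 n) ω = Ico 1 k} := by
    rw [Filter.eventuallyEq_set]
    filter_upwards [h₀] with ω hω
    simp only [blockOneCount_eq_card_blockWithin_add_one hω hk,
      blockOneCount_eq_card_blockWithin_add_one hω (hk.trans hkn), blockWithin,
      ← filter_eq_iff_of_subset hIco, ← card_filter_eq_iff, Nat.card_Ico]
    omega
  have hsymm : ∀ T ∈ (Ico 1 n).powersetCard (k - 1),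
      μ {ω | blockWithin X 0 (Ico 1 n) ω = T} = μ {ω | blockWithin X 0 (Ico 1 n) ω = Ico 1 k} :=
    fun T hT => hexch.measure_blockWithin_eq_of_card_eq hX (by simp) (mem_powersetCard.1 hT).1
      hIco (by rw [(mem_powersetCard.1 hT).2, Nat.card_Ico])
  rw [measure_congr hcount, measure_congr hjoint,
    measure_card_eq_sum_powersetCard (F := blockWithin X 0 (Ico 1 n))
      (fun _ => filter_subset _ _) (measurableSet_blockWithin_eq hX 0 _),
    sum_congr rfl hsymm, sum_const, card_powersetCard, Nat.card_Ico, nsmul_eq_mul]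

end Blocks

theorem exchangeable_partition_identities_general
    {Ω : Type*} [MeasurableSpace Ω] (μ : Measure Ω)
    (X : Ω → ℕ → ℕ → Bool) (hXmeas : Measurable X)
    (hequiv : ∀ᵐ ω ∂μ, Equivalence (fun i j => X ω i j = true))
    (hexch : ∀ σ : Equiv.Perm ℕ,
      Measure.map X μ = Measure.map (fun ω i j => X ω (σ i) (σ j)) μ)
    (n k : ℕ) (hk : 1 ≤ k) (hkn : k ≤ n) :
    (μ {ω | blockOneCount X k ω = k ∧ blockOneCount X n ω = k}).toReal =
        (((n - 1).choose (k - 1) : ℝ))⁻¹ * (μ {ω | blockOneCount X n ω = k}).toReal ∧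
      μ {ω | blockOneCount X n ω = 1} =
        μ {ω | numBlocks X n ω > numBlocks X (n - 1) ω} := by
  have h₀ : ∀ᵐ ω ∂μ, X ω 0 0 = true := by
    filter_upwards [hequiv] with ω h using h.refl 0
  have hexchangeable : IsExchangeable μ X := hexch
  constructor
  · have hchoose : ((n - 1).choose (k - 1) : ℝ) ≠ 0 :=
      Nat.cast_ne_zero.2 (Nat.choose_pos (by omega)).ne'
    rw [hexchangeable.measure_blockOneCount_eq_choose_mul hXmeas h₀ hk hkn, ENNReal.toReal_mul,
      ENNReal.toReal_natCast, inv_mul_cancel_left₀ hchoose]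
  · obtain ⟨m, rfl⟩ : ∃ m, n = m + 1 := ⟨n - 1, by omega⟩
    exact hexchangeable.measure_blockOneCount_eq_one hXmeas h₀ m

theorem exchangeable_partition_identities
    {Ω : Type*} [MeasurableSpace Ω] (μ : Measure Ω) [IsProbabilityMeasure μ]
    (X : Ω → ℕ → ℕ → Bool) (hXmeas : Measurable X)
    (hequiv : ∀ᵐ ω ∂μ, Equivalence (fun i j => X ω i j = true))
    (hexch : ∀ σ : Equiv.Perm ℕ,
      Measure.map X μ = Measure.map (fun ω i j => X ω (σ i) (σ j)) μ)
    (n k : ℕ) (hk : 1 ≤ k) (hkn : k ≤ n) :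
    (μ {ω | blockOneCount X k ω = k ∧ blockOneCount X n ω = k}).toReal =
        (((n - 1).choose (k - 1) : ℝ))⁻¹ * (μ {ω | blockOneCount X n ω = k}).toReal ∧
      μ {ω | blockOneCount X n ω = 1} =
        μ {ω | numBlocks X n ω > numBlocks X (n - 1) ω} :=
  exchangeable_partition_identities_general μ X hXmeas hequiv hexch n k hk hkn
end
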